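/- arXiv:2402.00436 — 2 statements merged into one kernel-verified Lean document; each statement's English description precedes it below -/
import Mathlib

section
/- Strict feasibility of polynomial approximants for the exit-location problem: Let X ⊂ ℝ^m be open and bounded with closure contained in K := [−1,1]^m and boundary ∂X. Let a_{ij}, f_{0i} (1 ≤ i,j ≤ m) be polynomials, define the operator L w := −Σ_{i,j} a_{ij} ∂ᵢ∂ⱼ w + Σ_i f_{0i} ∂ᵢ w for C² functions w, and set A := sup_{x∈K} (Σ_{i,j} |a_{ij}(x)| + Σ_i |f_{0i}(x)|). Let g : ∂X → ℝ, and let v, u be C² functions on K with L v = 0 on X, v = g on ∂X, L u = −1 on X, and u = 0 on ∂X. Let k ≥ 1, d ≥ 1 be integers, c₁ > 0 with A·c₁/d^k < 1, and let p_d, q_d be polynomials with ‖v − p_d‖_{C²(K)} ≤ c₁/d^k and ‖u − q_d‖_{C²(K)} ≤ c₁/d^k. Define θ := (2Ac₁/d^k)/(1 − Ac₁/d^k), η := (c₁/d^k)(1 + 2/θ), and v_d := p_d + θ(q_d − η). Then L v_d ≤ −Ac₁/d^k on X and v_d ≤ g − c₁/d^k on ∂X. -/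
open MvPolynomial

/-- The box `[-1,1]^σ`. -/
def unitBox (σ : Type*) : Set (σ → ℝ) := {x | ∀ i, x i ∈ Set.Icc (-1 : ℝ) 1}

/-- The partial derivative `∂w/∂x_j`. -/
noncomputable def pd {m : ℕ} (w : (Fin m → ℝ) → ℝ) (j : Fin m)
    (x : Fin m → ℝ) : ℝ :=
  fderiv ℝ w x (Pi.single j 1)

/-- The second order differential operator
`L w = -∑_{i,j} a_{ij} ∂ᵢ∂ⱼ w + ∑_i f_{0i} ∂ᵢ w`. -/
noncomputable def Lop {m : ℕ} (a : Fin m → Fin m → MvPolynomial (Fin m) ℝ)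
    (f0 : Fin m → MvPolynomial (Fin m) ℝ) (w : (Fin m → ℝ) → ℝ)
    (x : Fin m → ℝ) : ℝ :=
  -(∑ i, ∑ j, eval x (a i j) * pd (fun z => pd w j z) i x) +
    ∑ i, eval x (f0 i) * pd w i x

/-- The `C²(K)` norm: maximum over `K` of `|w|` and of the absolute values of all
first and second order partial derivatives. -/
noncomputable def C2norm {m : ℕ} (K : Set (Fin m → ℝ))
    (w : (Fin m → ℝ) → ℝ) : ℝ :=
  (⨆ x : K, |w x.1|) ⊔ ((⨆ i : Fin m, ⨆ x : K, |pd w i x.1|) ⊔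
    ⨆ i : Fin m, ⨆ j : Fin m, ⨆ x : K, |pd (fun z => pd w j z) i x.1|)

section Helpers

open Set Topology Filter

variable {m : ℕ}

lemma unitBox_eq (m : ℕ) :
    unitBox (Fin m) = Set.pi Set.univ (fun _ => Set.Icc (-1:ℝ) 1) := by
  ext x; simp only [unitBox, Set.mem_setOf_eq, Set.mem_univ_pi]

lemma unitBox_compact (m : ℕ) : IsCompact (unitBox (Fin m)) := by
  rw [unitBox_eq]; exact isCompact_univ_pi fun _ => isCompact_Icc

lemma unitBox_convex (m : ℕ) : Convex ℝ (unitBox (Fin m)) := by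
  rw [unitBox_eq]; exact convex_pi fun i _ => convex_Icc _ _

lemma unitBox_interior (m : ℕ) :
    interior (unitBox (Fin m)) = Set.pi Set.univ (fun _ => Set.Ioo (-1:ℝ) 1) := by
  rw [unitBox_eq, interior_pi_set Set.finite_univ]
  simp

lemma unitBox_interior_nonempty (m : ℕ) : (interior (unitBox (Fin m))).Nonempty := by
  rw [unitBox_interior]
  exact ⟨0, by intro i _; norm_num⟩

lemma unitBox_uniqueDiffOn (m : ℕ) : UniqueDiffOn ℝ (unitBox (Fin m)) :=
  uniqueDiffOn_convex (unitBox_convex m) (unitBox_interior_nonempty m)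

lemma unitBox_closure_interior (m : ℕ) :
    closure (interior (unitBox (Fin m))) = unitBox (Fin m) := by
  rw [unitBox_interior, closure_pi_set, unitBox_eq]
  ext i
  rw [Set.mem_univ_pi, Set.mem_univ_pi]
  refine forall_congr' fun j => ?_
  rw [closure_Ioo (by norm_num : (-1:ℝ) ≠ 1)]

lemma contDiff_mveval {m : ℕ} (p : MvPolynomial (Fin m) ℝ) {n : ℕ∞} :
    ContDiff ℝ n (fun x : Fin m → ℝ => eval x p) :=
  (AnalyticOnNhd.eval_mvPolynomial p).contDiff

lemma norm_pi_single {m : ℕ} (i : Fin m) : ‖(Pi.single i 1 : Fin m → ℝ)‖ ≤ 1 := by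
  apply pi_norm_le_iff_of_nonneg (by norm_num) |>.2
  intro j
  by_cases h : j = i
  · subst h; simp
  · simp [Pi.single_apply, h]

/-- The values themselves are bounded on the box. -/
lemma bdd_val {w : (Fin m → ℝ) → ℝ}
    (hw : ContDiffOn ℝ 2 w (unitBox (Fin m))) :
    BddAbove (Set.range fun x : unitBox (Fin m) => |w x.1|) := by
  obtain ⟨M, hM⟩ := (unitBox_compact m).exists_bound_of_continuousOn hw.continuousOn
  refine ⟨M, ?_⟩
  rintro - ⟨x, rfl⟩
  exact hM x.1 x.2

/-- The first order derivative family is bounded on the box. -/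
lemma bdd_pd {w : (Fin m → ℝ) → ℝ}
    (hw : ContDiffOn ℝ 2 w (unitBox (Fin m))) (i : Fin m) :
    BddAbove (Set.range fun x : unitBox (Fin m) => |pd w i x.1|) := by
  obtain ⟨M, hM⟩ := (unitBox_compact m).exists_bound_of_continuousOn
    (hw.continuousOn_fderivWithin (unitBox_uniqueDiffOn m) one_le_two)
  refine ⟨max M 0, ?_⟩
  rintro - ⟨x, rfl⟩
  by_cases hdiff : DifferentiableAt ℝ w x.1
  · show |fderiv ℝ w x.1 (Pi.single i 1)| ≤ _
    rw [← hdiff.fderivWithin ((unitBox_uniqueDiffOn m) x.1 x.2)]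
    calc |fderivWithin ℝ w (unitBox (Fin m)) x.1 (Pi.single i 1)|
        ≤ ‖fderivWithin ℝ w (unitBox (Fin m)) x.1‖ * ‖(Pi.single i 1 : Fin m → ℝ)‖ :=
          (fderivWithin ℝ w (unitBox (Fin m)) x.1).le_opNorm _
      _ ≤ M * 1 := by
          apply mul_le_mul (hM x.1 x.2) (norm_pi_single i) (norm_nonneg _)
          exact le_trans (norm_nonneg _) (hM x.1 x.2)
      _ ≤ max M 0 := by simp
  · show |fderiv ℝ w x.1 (Pi.single i 1)| ≤ _
    rw [fderiv_zero_of_not_differentiableAt hdiff]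
    simp

/-- The second order derivative family is bounded on the box. -/
lemma bdd_pd2 {w : (Fin m → ℝ) → ℝ}
    (hw : ContDiffOn ℝ 2 w (unitBox (Fin m))) (i j : Fin m) :
    BddAbove (Set.range fun x : unitBox (Fin m) =>
      |pd (fun z => pd w j z) i x.1|) := by
  have hUD := unitBox_uniqueDiffOn m
  set F := fderivWithin ℝ w (unitBox (Fin m)) with hFdef
  have hF : ContDiffOn ℝ 1 F (unitBox (Fin m)) := hw.fderivWithin hUD (by norm_num)
  obtain ⟨M, hM⟩ := (unitBox_compact m).exists_bound_of_continuousOn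
    (hF.continuousOn_fderivWithin hUD le_rfl)
  -- h agrees with y ↦ F y (e j) on interior K
  have heq : ∀ y ∈ interior (unitBox (Fin m)), pd w j y = F y (Pi.single j 1) := by
    intro y hy
    have hmem : unitBox (Fin m) ∈ 𝓝 y :=
      mem_nhds_iff.2 ⟨interior (unitBox (Fin m)), interior_subset, isOpen_interior, hy⟩
    have hdy : DifferentiableAt ℝ w y :=
      (hw.contDiffAt hmem).differentiableAt two_ne_zero
    show fderiv ℝ w y (Pi.single j 1) = _
    rw [← hdy.fderivWithin (hUD y (interior_subset hy))]
  refine ⟨max M 0, ?_⟩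
  rintro - ⟨x, rfl⟩
  by_cases hdiff : DifferentiableAt ℝ (fun z => pd w j z) x.1
  · have hclos : x.1 ∈ closure (interior (unitBox (Fin m))) := by
      rw [unitBox_closure_interior]; exact x.2
    have hud : UniqueDiffWithinAt ℝ (interior (unitBox (Fin m))) x.1 :=
      uniqueDiffWithinAt_convex (unitBox_convex m).interior
        (by rw [interior_interior]; exact unitBox_interior_nonempty m) hclos
    set L := ContinuousLinearMap.apply ℝ ℝ (Pi.single j 1 : Fin m → ℝ) with hLdef
    have hFd : DifferentiableWithinAt ℝ F (unitBox (Fin m)) x.1 :=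
      (hF.differentiableOn one_ne_zero) x.1 x.2
    have hG : HasFDerivWithinAt (fun y => F y (Pi.single j 1))
        (L.comp (fderivWithin ℝ F (unitBox (Fin m)) x.1)) (unitBox (Fin m)) x.1 :=
      L.hasFDerivAt.comp_hasFDerivWithinAt x.1 hFd.hasFDerivWithinAt
    have hG' : HasFDerivWithinAt (fun y => F y (Pi.single j 1))
        (L.comp (fderivWithin ℝ F (unitBox (Fin m)) x.1))
        (interior (unitBox (Fin m))) x.1 := hG.mono interior_subset
    have hxval : pd w j x.1 = F x.1 (Pi.single j 1) := by
      have hne : (𝓝[interior (unitBox (Fin m))] x.1).NeBot :=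
        mem_closure_iff_nhdsWithin_neBot.1 hclos
      have t1 : Filter.Tendsto (fun z => pd w j z) (𝓝[interior (unitBox (Fin m))] x.1)
          (𝓝 (pd w j x.1)) := (hdiff.continuousAt.continuousWithinAt)
      have t2 : Filter.Tendsto (fun y => F y (Pi.single j 1))
          (𝓝[interior (unitBox (Fin m))] x.1)
          (𝓝 (F x.1 (Pi.single j 1))) :=
        hG.continuousWithinAt.mono_left (nhdsWithin_mono _ interior_subset)
      have t3 : Filter.Tendsto (fun z => pd w j z) (𝓝[interior (unitBox (Fin m))] x.1)
          (𝓝 (F x.1 (Pi.single j 1))) := by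
        refine t2.congr' ?_
        filter_upwards [eventually_mem_nhdsWithin] with y hy
        exact (heq y hy).symm
      exact tendsto_nhds_unique t1 t3
    have hh : HasFDerivWithinAt (fun z => pd w j z)
        (L.comp (fderivWithin ℝ F (unitBox (Fin m)) x.1))
        (interior (unitBox (Fin m))) x.1 :=
      hG'.congr (fun y hy => heq y hy) hxval
    have hh2 : HasFDerivWithinAt (fun z => pd w j z)
        (fderiv ℝ (fun z => pd w j z) x.1)
        (interior (unitBox (Fin m))) x.1 := hdiff.hasFDerivAt.hasFDerivWithinAt
    have deq : fderiv ℝ (fun z => pd w j z) x.1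
        = L.comp (fderivWithin ℝ F (unitBox (Fin m)) x.1) := hud.eq hh2 hh
    show |fderiv ℝ (fun z => pd w j z) x.1 (Pi.single i 1)| ≤ _
    rw [deq]
    have hM' : 0 ≤ M := le_trans (norm_nonneg _) (hM x.1 x.2)
    calc |(L.comp (fderivWithin ℝ F (unitBox (Fin m)) x.1)) (Pi.single i 1)|
        = |(fderivWithin ℝ F (unitBox (Fin m)) x.1 (Pi.single i 1)) (Pi.single j 1)| := by
          rw [ContinuousLinearMap.comp_apply, hLdef, ContinuousLinearMap.apply_apply]
      _ ≤ ‖fderivWithin ℝ F (unitBox (Fin m)) x.1 (Pi.single i 1)‖ *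
            ‖(Pi.single j 1 : Fin m → ℝ)‖ :=
          (fderivWithin ℝ F (unitBox (Fin m)) x.1 (Pi.single i 1)).le_opNorm _
      _ ≤ (‖fderivWithin ℝ F (unitBox (Fin m)) x.1‖ *
            ‖(Pi.single i 1 : Fin m → ℝ)‖) * 1 := by
          apply mul_le_mul ((fderivWithin ℝ F (unitBox (Fin m)) x.1).le_opNorm _)
            (norm_pi_single j) (norm_nonneg _)
          positivity
      _ ≤ (M * 1) * 1 := by
          apply mul_le_mul_of_nonneg_right _ zero_le_one
          exact mul_le_mul (hM x.1 x.2) (norm_pi_single i) (norm_nonneg _) hM'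
      _ ≤ max M 0 := by simp
  · show |fderiv ℝ (fun z => pd w j z) x.1 (Pi.single i 1)| ≤ _
    rw [fderiv_zero_of_not_differentiableAt hdiff]
    simp

/-- Pointwise bounds from the `C²` norm. -/
lemma C2norm_bounds {w : (Fin m → ℝ) → ℝ}
    (hw : ContDiffOn ℝ 2 w (unitBox (Fin m))) :
    (∀ x ∈ unitBox (Fin m), |w x| ≤ C2norm (unitBox (Fin m)) w) ∧
    (∀ l : Fin m, ∀ x ∈ unitBox (Fin m),
      |pd w l x| ≤ C2norm (unitBox (Fin m)) w) ∧
    (∀ i l : Fin m, ∀ x ∈ unitBox (Fin m),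
      |pd (fun z => pd w l z) i x| ≤ C2norm (unitBox (Fin m)) w) := by
  refine ⟨?_, ?_, ?_⟩
  · intro x hx
    exact le_trans (le_ciSup (bdd_val hw) (⟨x, hx⟩ : unitBox (Fin m))) le_sup_left
  · intro l x hx
    calc |pd w l x|
        ≤ ⨆ x : unitBox (Fin m), |pd w l x.1| :=
          le_ciSup (bdd_pd hw l) (⟨x, hx⟩ : unitBox (Fin m))
      _ ≤ ⨆ i : Fin m, ⨆ x : unitBox (Fin m), |pd w i x.1| :=
          le_ciSup (f := fun i : Fin m => ⨆ x : unitBox (Fin m), |pd w i x.1|)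
            (Set.finite_range _).bddAbove l
      _ ≤ C2norm (unitBox (Fin m)) w := le_trans le_sup_left le_sup_right
  · intro i l x hx
    calc |pd (fun z => pd w l z) i x|
        ≤ ⨆ x : unitBox (Fin m), |pd (fun z => pd w l z) i x.1| :=
          le_ciSup (bdd_pd2 hw i l) (⟨x, hx⟩ : unitBox (Fin m))
      _ ≤ ⨆ j : Fin m, ⨆ x : unitBox (Fin m), |pd (fun z => pd w j z) i x.1| :=
          le_ciSup (f := fun j : Fin m =>
            ⨆ x : unitBox (Fin m), |pd (fun z => pd w j z) i x.1|)
            (Set.finite_range _).bddAbove l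
      _ ≤ ⨆ i : Fin m, ⨆ j : Fin m, ⨆ x : unitBox (Fin m),
            |pd (fun z => pd w j z) i x.1| :=
          le_ciSup (f := fun i : Fin m => ⨆ j : Fin m,
            ⨆ x : unitBox (Fin m), |pd (fun z => pd w j z) i x.1|)
            (Set.finite_range _).bddAbove i
      _ ≤ C2norm (unitBox (Fin m)) w := le_trans le_sup_right le_sup_right

/-- Pointwise bound on `Lop`. -/
lemma abs_Lop_le {a : Fin m → Fin m → MvPolynomial (Fin m) ℝ}
    {f0 : Fin m → MvPolynomial (Fin m) ℝ} {w : (Fin m → ℝ) → ℝ}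
    {x : Fin m → ℝ} {ε : ℝ} (hε : 0 ≤ ε)
    (h1 : ∀ l, |pd w l x| ≤ ε)
    (h2 : ∀ i l, |pd (fun z => pd w l z) i x| ≤ ε) :
    |Lop a f0 w x| ≤ ((∑ i, ∑ j, |eval x (a i j)|) + ∑ i, |eval x (f0 i)|) * ε := by
  unfold Lop
  have e1 : |∑ i, ∑ j, eval x (a i j) * pd (fun z => pd w j z) i x|
      ≤ (∑ i, ∑ j, |eval x (a i j)|) * ε := by
    rw [Finset.sum_mul]
    refine le_trans (Finset.abs_sum_le_sum_abs _ _) (Finset.sum_le_sum fun i _ => ?_)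
    rw [Finset.sum_mul]
    refine le_trans (Finset.abs_sum_le_sum_abs _ _) (Finset.sum_le_sum fun l _ => ?_)
    rw [abs_mul]
    exact mul_le_mul_of_nonneg_left (h2 i l) (abs_nonneg _)
  have e2 : |∑ i, eval x (f0 i) * pd w i x| ≤ (∑ i, |eval x (f0 i)|) * ε := by
    rw [Finset.sum_mul]
    refine le_trans (Finset.abs_sum_le_sum_abs _ _) (Finset.sum_le_sum fun i _ => ?_)
    rw [abs_mul]
    exact mul_le_mul_of_nonneg_left (h1 i) (abs_nonneg _)
  calc |-(∑ i, ∑ j, eval x (a i j) * pd (fun z => pd w j z) i x) +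
        ∑ i, eval x (f0 i) * pd w i x|
      ≤ |∑ i, ∑ j, eval x (a i j) * pd (fun z => pd w j z) i x| +
        |∑ i, eval x (f0 i) * pd w i x| := by
        refine le_trans (abs_add_le _ _) ?_
        rw [abs_neg]
    _ ≤ (∑ i, ∑ j, |eval x (a i j)|) * ε + (∑ i, |eval x (f0 i)|) * ε :=
        add_le_add e1 e2
    _ = ((∑ i, ∑ j, |eval x (a i j)|) + ∑ i, |eval x (f0 i)|) * ε := by ring

end Helpers

section Combo

open Set Topology Filter

variable {m : ℕ}

lemma Lop_combo {a : Fin m → Fin m → MvPolynomial (Fin m) ℝ}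
    {f0 : Fin m → MvPolynomial (Fin m) ℝ}
    {v u r s : (Fin m → ℝ) → ℝ} (θ η : ℝ)
    (hv : ContDiffOn ℝ 2 v (unitBox (Fin m)))
    (hu : ContDiffOn ℝ 2 u (unitBox (Fin m)))
    (hr : ContDiffOn ℝ 2 r (unitBox (Fin m)))
    (hs : ContDiffOn ℝ 2 s (unitBox (Fin m)))
    {X : Set (Fin m → ℝ)} (hXopen : IsOpen X) (hXK : X ⊆ unitBox (Fin m)) :
    ∀ x ∈ X, Lop a f0 (fun z => (v z - r z) + θ * ((u z - s z) - η)) x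
      = (Lop a f0 v x - Lop a f0 r x) + θ * (Lop a f0 u x - Lop a f0 s x) := by
  have hKx : ∀ y ∈ X, unitBox (Fin m) ∈ 𝓝 y := fun y hy =>
    mem_nhds_iff.2 ⟨X, hXK, hXopen, hy⟩
  have hpd1 : ∀ y ∈ X, ∀ l, pd (fun z => (v z - r z) + θ * ((u z - s z) - η)) l y
      = (pd v l y - pd r l y) + θ * (pd u l y - pd s l y) := by
    intro y hy l
    have Hv := (((hv.contDiffAt (hKx y hy)).differentiableAt two_ne_zero)).hasFDerivAt
    have Hu := (((hu.contDiffAt (hKx y hy)).differentiableAt two_ne_zero)).hasFDerivAt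
    have Hr := (((hr.contDiffAt (hKx y hy)).differentiableAt two_ne_zero)).hasFDerivAt
    have Hs := (((hs.contDiffAt (hKx y hy)).differentiableAt two_ne_zero)).hasFDerivAt
    have hF : HasFDerivAt (fun z => (v z - r z) + θ * ((u z - s z) - η))
        ((fderiv ℝ v y - fderiv ℝ r y) + θ • (fderiv ℝ u y - fderiv ℝ s y)) y :=
      (Hv.sub Hr).add (((Hu.sub Hs).sub_const η).const_mul θ)
    show fderiv ℝ (fun z => (v z - r z) + θ * ((u z - s z) - η)) y (Pi.single l 1) = _
    rw [hF.fderiv]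
    simp only [ContinuousLinearMap.add_apply, ContinuousLinearMap.sub_apply,
      ContinuousLinearMap.coe_smul', Pi.smul_apply, smul_eq_mul]
    rfl
  intro x hx
  have hpd2 : ∀ i l,
      pd (fun z => pd (fun z' => (v z' - r z') + θ * ((u z' - s z') - η)) l z) i x
      = (pd (fun z => pd v l z) i x - pd (fun z => pd r l z) i x)
        + θ * (pd (fun z => pd u l z) i x - pd (fun z => pd s l z) i x) := by
    intro i l
    have hev : (fun z => pd (fun z' => (v z' - r z') + θ * ((u z' - s z') - η)) l z)
        =ᶠ[𝓝 x] fun z => (pd v l z - pd r l z) + θ * (pd u l z - pd s l z) := by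
      filter_upwards [hXopen.mem_nhds hx] with y hy
      exact hpd1 y hy l
    have dv2 : DifferentiableAt ℝ (fun z => pd v l z) x := by
      have h1 : ContDiffAt ℝ 1 (fderiv ℝ v) x :=
        (hv.contDiffAt (hKx x hx)).fderiv_right le_rfl
      exact (h1.differentiableAt one_ne_zero).clm_apply (differentiableAt_const _)
    have du2 : DifferentiableAt ℝ (fun z => pd u l z) x := by
      have h1 : ContDiffAt ℝ 1 (fderiv ℝ u) x :=
        (hu.contDiffAt (hKx x hx)).fderiv_right le_rfl
      exact (h1.differentiableAt one_ne_zero).clm_apply (differentiableAt_const _)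
    have dr2 : DifferentiableAt ℝ (fun z => pd r l z) x := by
      have h1 : ContDiffAt ℝ 1 (fderiv ℝ r) x :=
        (hr.contDiffAt (hKx x hx)).fderiv_right le_rfl
      exact (h1.differentiableAt one_ne_zero).clm_apply (differentiableAt_const _)
    have ds2 : DifferentiableAt ℝ (fun z => pd s l z) x := by
      have h1 : ContDiffAt ℝ 1 (fderiv ℝ s) x :=
        (hs.contDiffAt (hKx x hx)).fderiv_right le_rfl
      exact (h1.differentiableAt one_ne_zero).clm_apply (differentiableAt_const _)
    have hF2 : HasFDerivAt (fun z => (pd v l z - pd r l z) + θ * (pd u l z - pd s l z))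
        ((fderiv ℝ (fun z => pd v l z) x - fderiv ℝ (fun z => pd r l z) x)
          + θ • (fderiv ℝ (fun z => pd u l z) x - fderiv ℝ (fun z => pd s l z) x)) x :=
      (dv2.hasFDerivAt.sub dr2.hasFDerivAt).add
        ((du2.hasFDerivAt.sub ds2.hasFDerivAt).const_mul θ)
    show fderiv ℝ (fun z => pd (fun z' => (v z' - r z') + θ * ((u z' - s z') - η)) l z)
        x (Pi.single i 1) = _
    rw [hev.fderiv_eq, hF2.fderiv]
    simp only [ContinuousLinearMap.add_apply, ContinuousLinearMap.sub_apply,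
      ContinuousLinearMap.coe_smul', Pi.smul_apply, smul_eq_mul]
    rfl
  have key : ∀ (c A B C D : Fin m → ℝ),
      ∑ i, c i * ((A i - B i) + θ * (C i - D i))
      = ((∑ i, c i * A i) - ∑ i, c i * B i)
        + θ * ((∑ i, c i * C i) - ∑ i, c i * D i) := by
    intro c A B C D
    have h : ∀ i : Fin m, c i * ((A i - B i) + θ * (C i - D i))
        = (c i * A i - c i * B i) + (θ * (c i * C i) - θ * (c i * D i)) :=
      fun i => by ring
    rw [Finset.sum_congr rfl (fun i _ => h i), Finset.sum_add_distrib,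
      Finset.sum_sub_distrib, Finset.sum_sub_distrib, ← Finset.mul_sum, ← Finset.mul_sum]
    ring
  have key1 : ∀ (P Q R S : Fin m → ℝ),
      ∑ i, ((P i - Q i) + θ * (R i - S i))
      = ((∑ i, P i) - ∑ i, Q i) + θ * ((∑ i, R i) - ∑ i, S i) := by
    intro P Q R S
    have h : ∀ i : Fin m, (P i - Q i) + θ * (R i - S i)
        = (P i - Q i) + (θ * R i - θ * S i) := fun i => by ring
    rw [Finset.sum_congr rfl (fun i _ => h i), Finset.sum_add_distrib,
      Finset.sum_sub_distrib, Finset.sum_sub_distrib, ← Finset.mul_sum, ← Finset.mul_sum]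
    ring
  unfold Lop
  simp only [hpd2, hpd1 x hx]
  have E1 : ∀ i, (∑ l, eval x (a i l) *
        ((pd (fun z => pd v l z) i x - pd (fun z => pd r l z) i x)
          + θ * (pd (fun z => pd u l z) i x - pd (fun z => pd s l z) i x)))
      = ((∑ l, eval x (a i l) * pd (fun z => pd v l z) i x)
          - ∑ l, eval x (a i l) * pd (fun z => pd r l z) i x)
        + θ * ((∑ l, eval x (a i l) * pd (fun z => pd u l z) i x)
          - ∑ l, eval x (a i l) * pd (fun z => pd s l z) i x) :=
    fun i => key _ _ _ _ _
  have E1' : (∑ i, ∑ l, eval x (a i l) *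
        ((pd (fun z => pd v l z) i x - pd (fun z => pd r l z) i x)
          + θ * (pd (fun z => pd u l z) i x - pd (fun z => pd s l z) i x)))
      = ∑ i, (((∑ l, eval x (a i l) * pd (fun z => pd v l z) i x)
          - ∑ l, eval x (a i l) * pd (fun z => pd r l z) i x)
        + θ * ((∑ l, eval x (a i l) * pd (fun z => pd u l z) i x)
          - ∑ l, eval x (a i l) * pd (fun z => pd s l z) i x)) :=
    Finset.sum_congr rfl fun i _ => E1 i
  have E2 : (∑ i, eval x (f0 i) *
        ((pd v i x - pd r i x) + θ * (pd u i x - pd s i x)))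
      = ((∑ i, eval x (f0 i) * pd v i x) - ∑ i, eval x (f0 i) * pd r i x)
        + θ * ((∑ i, eval x (f0 i) * pd u i x) - ∑ i, eval x (f0 i) * pd s i x) :=
    key _ _ _ _ _
  have E3 := key1 (fun i => ∑ l, eval x (a i l) * pd (fun z => pd v l z) i x)
    (fun i => ∑ l, eval x (a i l) * pd (fun z => pd r l z) i x)
    (fun i => ∑ l, eval x (a i l) * pd (fun z => pd u l z) i x)
    (fun i => ∑ l, eval x (a i l) * pd (fun z => pd s l z) i x)
  rw [E1', E2, E3]
  ring

end Combo

/-- **Strict feasibility of polynomial approximants for the exit-location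
problem.** -/
theorem exit_location_strict_feasibility
    {m : ℕ} (X : Set (Fin m → ℝ)) (hXopen : IsOpen X)
    (hXbdd : Bornology.IsBounded X) (hXsub : closure X ⊆ unitBox (Fin m))
    (a : Fin m → Fin m → MvPolynomial (Fin m) ℝ)
    (f0 : Fin m → MvPolynomial (Fin m) ℝ)
    (A : ℝ)
    (hA : A = ⨆ x : unitBox (Fin m),
      ((∑ i, ∑ j, |eval x.1 (a i j)|) + ∑ i, |eval x.1 (f0 i)|))
    (g : frontier X → ℝ)
    (v u : (Fin m → ℝ) → ℝ)
    (hv : ContDiffOn ℝ 2 v (unitBox (Fin m)))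
    (hu : ContDiffOn ℝ 2 u (unitBox (Fin m)))
    (hLv : ∀ x ∈ X, Lop a f0 v x = 0)
    (hvg : ∀ x : frontier X, v x.1 = g x)
    (hLu : ∀ x ∈ X, Lop a f0 u x = -1)
    (hu0 : ∀ x ∈ frontier X, u x = 0)
    (k d : ℕ) (hk : 1 ≤ k) (hd : 1 ≤ d)
    (c₁ : ℝ) (hc₁ : 0 < c₁) (hsmall : A * c₁ / (d : ℝ) ^ k < 1)
    (pD qD : MvPolynomial (Fin m) ℝ)
    (hpD : C2norm (unitBox (Fin m)) (fun x => v x - eval x pD) ≤ c₁ / (d : ℝ) ^ k)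
    (hqD : C2norm (unitBox (Fin m)) (fun x => u x - eval x qD) ≤ c₁ / (d : ℝ) ^ k)
    (θ η : ℝ)
    (hθ : θ = (2 * A * c₁ / (d : ℝ) ^ k) / (1 - A * c₁ / (d : ℝ) ^ k))
    (hη : η = (c₁ / (d : ℝ) ^ k) * (1 + 2 / θ)) :
    (∀ x ∈ X, Lop a f0 (fun z => eval z pD + θ * (eval z qD - η)) x
        ≤ -(A * c₁ / (d : ℝ) ^ k)) ∧
      ∀ x : frontier X,
        eval x.1 pD + θ * (eval x.1 qD - η) ≤ g x - c₁ / (d : ℝ) ^ k := by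
  have hXK : X ⊆ unitBox (Fin m) := fun y hy => hXsub (subset_closure hy)
  rcases Set.eq_empty_or_nonempty X with hXe | ⟨x₀, hx₀⟩
  · constructor
    · intro x hx
      rw [hXe] at hx
      exact absurd hx (Set.notMem_empty x)
    · intro x
      exfalso
      have hfr : frontier X = ∅ := by rw [hXe, frontier_empty]
      exact (Set.eq_empty_iff_forall_notMem.1 hfr) x.1 x.2
  set ε := c₁ / (d : ℝ) ^ k with hεdef
  have hdp : (0:ℝ) < (d : ℝ) ^ k := by
    have : (0:ℝ) < (d : ℝ) := by exact_mod_cast Nat.lt_of_lt_of_le Nat.zero_lt_one hd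
    positivity
  have hε : 0 < ε := div_pos hc₁ hdp
  have hAε : A * c₁ / (d : ℝ) ^ k = A * ε := by rw [hεdef, mul_div_assoc]
  set r : (Fin m → ℝ) → ℝ := fun x => v x - eval x pD with hrdef
  set s : (Fin m → ℝ) → ℝ := fun x => u x - eval x qD with hsdef
  have hr : ContDiffOn ℝ 2 r (unitBox (Fin m)) := hv.sub (contDiff_mveval pD).contDiffOn
  have hs : ContDiffOn ℝ 2 s (unitBox (Fin m)) := hu.sub (contDiff_mveval qD).contDiffOn
  obtain ⟨hr0, hr1, hr2⟩ := C2norm_bounds hr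
  obtain ⟨hs0, hs1, hs2⟩ := C2norm_bounds hs
  have hr0' : ∀ x ∈ unitBox (Fin m), |r x| ≤ ε := fun x hx => (hr0 x hx).trans hpD
  have hr1' : ∀ l, ∀ x ∈ unitBox (Fin m), |pd r l x| ≤ ε :=
    fun l x hx => (hr1 l x hx).trans hpD
  have hr2' : ∀ i l, ∀ x ∈ unitBox (Fin m), |pd (fun z => pd r l z) i x| ≤ ε :=
    fun i l x hx => (hr2 i l x hx).trans hpD
  have hs0' : ∀ x ∈ unitBox (Fin m), |s x| ≤ ε := fun x hx => (hs0 x hx).trans hqD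
  have hs1' : ∀ l, ∀ x ∈ unitBox (Fin m), |pd s l x| ≤ ε :=
    fun l x hx => (hs1 l x hx).trans hqD
  have hs2' : ∀ i l, ∀ x ∈ unitBox (Fin m), |pd (fun z => pd s l z) i x| ≤ ε :=
    fun i l x hx => (hs2 i l x hx).trans hqD
  -- bounds on the coefficient sum
  have hScont : ContinuousOn
      (fun y => (∑ i, ∑ j, |eval y (a i j)|) + ∑ i, |eval y (f0 i)|)
      (unitBox (Fin m)) := by
    apply Continuous.continuousOn
    apply Continuous.add
    · exact continuous_finset_sum _ fun i _ => continuous_finset_sum _ fun j _ =>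
        ((contDiff_mveval (a i j) (n := 0)).continuous).abs
    · exact continuous_finset_sum _ fun i _ =>
        ((contDiff_mveval (f0 i) (n := 0)).continuous).abs
  obtain ⟨MS, hMS⟩ := (unitBox_compact m).exists_bound_of_continuousOn hScont
  have hSbdd : BddAbove (Set.range fun x : unitBox (Fin m) =>
      (∑ i, ∑ j, |eval x.1 (a i j)|) + ∑ i, |eval x.1 (f0 i)|) := by
    refine ⟨MS, ?_⟩
    rintro - ⟨x, rfl⟩
    exact (le_abs_self _).trans (by simpa using hMS x.1 x.2)
  have hSA : ∀ y ∈ unitBox (Fin m),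
      (∑ i, ∑ j, |eval y (a i j)|) + ∑ i, |eval y (f0 i)| ≤ A := by
    intro y hy
    rw [hA]
    exact le_ciSup hSbdd ⟨y, hy⟩
  have hSnonneg : ∀ y : Fin m → ℝ,
      (0:ℝ) ≤ (∑ i, ∑ j, |eval y (a i j)|) + ∑ i, |eval y (f0 i)| := fun y =>
    add_nonneg (Finset.sum_nonneg fun i _ => Finset.sum_nonneg fun j _ => abs_nonneg _)
      (Finset.sum_nonneg fun i _ => abs_nonneg _)
  have hx₀K : x₀ ∈ unitBox (Fin m) := hXK hx₀
  have hApos : 0 < A := by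
    rcases lt_or_ge 0 A with h | h
    · exact h
    exfalso
    have hS0 : (∑ i, ∑ j, |eval x₀ (a i j)|) + ∑ i, |eval x₀ (f0 i)| = 0 :=
      le_antisymm ((hSA x₀ hx₀K).trans h) (hSnonneg x₀)
    have hq1 : (0:ℝ) ≤ ∑ i, ∑ j, |eval x₀ (a i j)| :=
      Finset.sum_nonneg fun i _ => Finset.sum_nonneg fun j _ => abs_nonneg _
    have hq2 : (0:ℝ) ≤ ∑ i, |eval x₀ (f0 i)| :=
      Finset.sum_nonneg fun i _ => abs_nonneg _
    have h1 : ∑ i, ∑ j, |eval x₀ (a i j)| = 0 := by linarith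
    have h2 : ∑ i, |eval x₀ (f0 i)| = 0 := by linarith
    have ha0 : ∀ i j, eval x₀ (a i j) = 0 := by
      intro i j
      have hi := (Finset.sum_eq_zero_iff_of_nonneg
        (fun i _ => Finset.sum_nonneg fun j _ => abs_nonneg
          ((eval x₀) (a i j)))).1 h1 i (Finset.mem_univ i)
      have hj := (Finset.sum_eq_zero_iff_of_nonneg (fun j _ => abs_nonneg _)).1 hi j
        (Finset.mem_univ j)
      exact abs_eq_zero.1 hj
    have hf00 : ∀ i, eval x₀ (f0 i) = 0 := by
      intro i
      have hi := (Finset.sum_eq_zero_iff_of_nonneg (fun i _ => abs_nonneg _)).1 h2 i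
        (Finset.mem_univ i)
      exact abs_eq_zero.1 hi
    have hcontr := hLu x₀ hx₀
    unfold Lop at hcontr
    simp only [ha0, hf00, zero_mul, Finset.sum_const_zero, neg_zero, add_zero,
      zero_add] at hcontr
    norm_num at hcontr
  have hAε1 : A * ε < 1 := by rw [← hAε]; exact hsmall
  have hAεpos : 0 < A * ε := mul_pos hApos hε
  have h1Aε : 0 < 1 - A * ε := by linarith
  have hθeq : θ = 2 * (A * ε) / (1 - A * ε) := by
    rw [hθ, hεdef]
    ring_nf
  have hθpos : 0 < θ := by
    rw [hθeq]
    exact div_pos (by linarith) h1Aε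
  have hθ1 : θ * (1 - A * ε) = 2 * (A * ε) := by
    rw [hθeq]
    field_simp
  have hθη : θ * η = θ * ε + 2 * ε := by
    rw [hη]
    field_simp
  have hfun : (fun z => eval z pD + θ * (eval z qD - η))
      = (fun z => (v z - r z) + θ * ((u z - s z) - η)) := by
    funext z
    simp only [hrdef, hsdef]
    ring
  have hcombo := Lop_combo (a := a) (f0 := f0) θ η hv hu hr hs hXopen hXK
  constructor
  · intro x hx
    have hxK := hXK hx
    have hLrbound : |Lop a f0 r x| ≤ A * ε := by
      refine le_trans (abs_Lop_le hε.le (fun l => hr1' l x hxK)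
        (fun i l => hr2' i l x hxK)) ?_
      exact mul_le_mul_of_nonneg_right (hSA x hxK) hε.le
    have hLsbound : |Lop a f0 s x| ≤ A * ε := by
      refine le_trans (abs_Lop_le hε.le (fun l => hs1' l x hxK)
        (fun i l => hs2' i l x hxK)) ?_
      exact mul_le_mul_of_nonneg_right (hSA x hxK) hε.le
    have heq : Lop a f0 (fun z => eval z pD + θ * (eval z qD - η)) x
        = (Lop a f0 v x - Lop a f0 r x) + θ * (Lop a f0 u x - Lop a f0 s x) := by
      rw [hfun]
      exact hcombo x hx
    rw [hAε, heq, hLv x hx, hLu x hx]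
    have hb1 := abs_le.1 hLrbound
    have hb2 := abs_le.1 hLsbound
    have h3 : θ * ((-1 : ℝ) - Lop a f0 s x) ≤ θ * (-1 + A * ε) :=
      mul_le_mul_of_nonneg_left (by linarith [hb2.1, hb2.2]) hθpos.le
    have h4 : θ * (-1 + A * ε) = -(2 * (A * ε)) := by
      rw [show θ * (-1 + A * ε) = -(θ * (1 - A * ε)) by ring, hθ1]
    linarith [hb1.1, hb1.2]
  · intro x
    have hxK : x.1 ∈ unitBox (Fin m) := hXsub (frontier_subset_closure x.2)
    have hrx := abs_le.1 (hr0' x.1 hxK)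
    have hsx := abs_le.1 (hs0' x.1 hxK)
    have hvx : v x.1 = g x := hvg x
    have hux : u x.1 = 0 := hu0 x.1 x.2
    have hPx : eval x.1 pD = v x.1 - r x.1 := by simp only [hrdef]; ring
    have hQx : eval x.1 qD = u x.1 - s x.1 := by simp only [hsdef]; ring
    rw [hPx, hQx, hvx, hux]
    have h5 : θ * ((0 - s x.1) - η) ≤ θ * (ε - η) :=
      mul_le_mul_of_nonneg_left (by linarith [hsx.1, hsx.2]) hθpos.le
    have h6 : θ * (ε - η) = -(2 * ε) := by rw [mul_sub, hθη]; ring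
    linarith [hrx.1, hrx.2]
end

section
/- Strict feasibility of the inward perturbation in Stokes-augmented volume computation: Let h ∈ ℝ[x₁,…,x_m] be a polynomial, X := {x ∈ ℝ^m : h(x) > 0} bounded and open with closure X̄ ⊆ K := [−1,1]^m and boundary ∂X, and assume ∇h(x) ≠ 0 for every x ∈ ∂X. Set a₁ := sup_{x∈X̄} |Δh(x)| and a₂ := inf_{x∈∂X} ‖∇h(x)‖², and assume a₁ > 0 (hence also a₂ > 0 since ∂X is compact). Let w : K → ℝ be continuous with w ≥ 0 on K, and let u : ℝ^m → ℝ^m be a C¹ vector field such that w(x) − (div u)(x) − 1 ≥ 0 for all x ∈ X̄ and u(x)·∇h(x) = 0 for all x ∈ ∂X. Then for every θ > 0, the pair w_θ := w + 2a₁θ, u_θ := u − θ∇h satisfies: (i) w_θ(x) ≥ 2a₁θ for all x ∈ K; (ii) w_θ(x) − (div u_θ)(x) − 1 ≥ a₁θ for all x ∈ X̄; (iii) −u_θ(x)·∇h(x) ≥ a₂θ for all x ∈ ∂X. -/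
open MvPolynomial

noncomputable def Dp {m : ℕ} (p : MvPolynomial (Fin m) ℝ) (x : Fin m → ℝ) :
    (Fin m → ℝ) →L[ℝ] ℝ :=
  ∑ i, (eval x (pderiv i p)) • (ContinuousLinearMap.proj i : (Fin m → ℝ) →L[ℝ] ℝ)

lemma hasFDerivAt_eval {m : ℕ} (p : MvPolynomial (Fin m) ℝ) (x : Fin m → ℝ) :
    HasFDerivAt (fun z => eval z p) (Dp p x) x := by
  induction p using MvPolynomial.induction_on with
  | C a =>
      have : Dp (C a : MvPolynomial (Fin m) ℝ) x = 0 := by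
        simp [Dp, pderiv_C]
      simpa [this] using (hasFDerivAt_const a x)
  | add p q hp hq =>
      have : Dp (p + q) x = Dp p x + Dp q x := by
        simp [Dp, add_smul, Finset.sum_add_distrib]
      simpa [this] using hp.fun_add hq
  | mul_X p i hp =>
      have hX : HasFDerivAt (fun z : Fin m → ℝ => z i)
          (ContinuousLinearMap.proj i : (Fin m → ℝ) →L[ℝ] ℝ) x :=
        (ContinuousLinearMap.proj (R := ℝ) (φ := fun _ : Fin m => ℝ) i).hasFDerivAt
      have := hp.fun_mul hX
      have hD : Dp (p * X i) x =
          eval x p • (ContinuousLinearMap.proj i : (Fin m → ℝ) →L[ℝ] ℝ)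
            + x i • Dp p x := by
        ext v
        simp [Dp, pderiv_mul, pderiv_X, Pi.single_apply, mul_add, add_mul,
          Finset.sum_add_distrib, Finset.mul_sum, mul_comm, mul_assoc, mul_left_comm,
          apply_ite (eval x), Finset.sum_ite_eq]
      rw [hD]
      simpa using this

lemma pd_eval {m : ℕ} (p : MvPolynomial (Fin m) ℝ) (j : Fin m) (x : Fin m → ℝ) :
    fderiv ℝ (fun z => eval z p) x (Pi.single j 1) = eval x (pderiv j p) := by
  rw [(hasFDerivAt_eval p x).fderiv]
  simp [Dp, Pi.single_apply]

lemma continuous_eval' {m : ℕ} (p : MvPolynomial (Fin m) ℝ) :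
    Continuous (fun x : Fin m → ℝ => eval x p) :=
  Differentiable.continuous fun x => (hasFDerivAt_eval p x).differentiableAt

lemma pd_sub_aux {m : ℕ} (u : (Fin m → ℝ) → (Fin m → ℝ)) (hu : ContDiff ℝ 1 u)
    (q : MvPolynomial (Fin m) ℝ) (θ : ℝ) (i : Fin m) (x : Fin m → ℝ) :
    pd (fun z => u z i - θ * eval z q) i x
      = pd (fun z => u z i) i x - θ * eval x (pderiv i q) := by
  have hui : DifferentiableAt ℝ (fun z => u z i) x :=
    ((ContinuousLinearMap.proj (R := ℝ) (φ := fun _ : Fin m => ℝ) i).differentiable.comp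
      (hu.differentiable one_ne_zero)) x
  have hq : DifferentiableAt ℝ (fun z => eval z q) x :=
    (hasFDerivAt_eval q x).differentiableAt
  unfold pd
  rw [fderiv_fun_sub hui (hq.const_mul θ), ContinuousLinearMap.sub_apply,
    fderiv_const_mul hq θ, ContinuousLinearMap.smul_apply, pd_eval]
  simp [smul_eq_mul]

/-- **Strict feasibility of the inward perturbation in Stokes-augmented volume
computation.** -/
theorem stokes_strict_feasibility
    {m : ℕ} (h : MvPolynomial (Fin m) ℝ)
    (X : Set (Fin m → ℝ)) (hX : X = {x | 0 < eval x h})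
    (hXbdd : Bornology.IsBounded X) (hXsub : closure X ⊆ unitBox (Fin m))
    (hgrad : ∀ x ∈ frontier X, (fun i => eval x (pderiv i h)) ≠ 0)
    (a₁ a₂ : ℝ)
    (ha₁ : a₁ = ⨆ x : closure X, |∑ i, eval x.1 (pderiv i (pderiv i h))|)
    (ha₂ : a₂ = ⨅ x : frontier X, ∑ i, (eval x.1 (pderiv i h)) ^ 2)
    (ha₁pos : 0 < a₁)
    (w : (Fin m → ℝ) → ℝ) (hwcont : ContinuousOn w (unitBox (Fin m)))
    (hw0 : ∀ x ∈ unitBox (Fin m), 0 ≤ w x)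
    (u : (Fin m → ℝ) → (Fin m → ℝ)) (hu : ContDiff ℝ 1 u)
    (hdiv : ∀ x ∈ closure X, 0 ≤ w x - (∑ i, pd (fun z => u z i) i x) - 1)
    (hbdry : ∀ x ∈ frontier X, ∑ i, u x i * eval x (pderiv i h) = 0)
    (θ : ℝ) (hθ : 0 < θ) :
    (∀ x ∈ unitBox (Fin m), 2 * a₁ * θ ≤ w x + 2 * a₁ * θ) ∧
    (∀ x ∈ closure X, a₁ * θ ≤ (w x + 2 * a₁ * θ) -
        (∑ i, pd (fun z => u z i - θ * eval z (pderiv i h)) i x) - 1) ∧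
    (∀ x ∈ frontier X, a₂ * θ ≤
        -∑ i, (u x i - θ * eval x (pderiv i h)) * eval x (pderiv i h)) := by
  have hK : IsCompact (closure X) := hXbdd.isCompact_closure
  -- bound on the Laplacian
  have hΔcont : Continuous (fun x : Fin m → ℝ =>
      |∑ i, eval x (pderiv i (pderiv i h))|) :=
    (continuous_finset_sum _ fun i _ => continuous_eval' _).abs
  have ha₁bd : ∀ x ∈ closure X,
      |∑ i, eval x (pderiv i (pderiv i h))| ≤ a₁ := by
    intro x hx
    have hbdd : BddAbove (Set.range fun x : closure X =>
        |∑ i, eval x.1 (pderiv i (pderiv i h))|) := by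
      have := (hK.bddAbove_image hΔcont.continuousOn)
      rwa [Set.image_eq_range] at this
    rw [ha₁]
    exact le_ciSup hbdd ⟨x, hx⟩
  have ha₂bd : ∀ x ∈ frontier X,
      a₂ ≤ ∑ i, (eval x (pderiv i h)) ^ 2 := by
    intro x hx
    have hbdd : BddBelow (Set.range fun x : frontier X =>
        ∑ i, (eval x.1 (pderiv i h)) ^ 2) := by
      refine ⟨0, ?_⟩
      rintro y ⟨z, rfl⟩
      exact Finset.sum_nonneg fun i _ => sq_nonneg _
    rw [ha₂]
    exact ciInf_le hbdd ⟨x, hx⟩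
  refine ⟨fun x hx => by linarith [hw0 x hx], ?_, ?_⟩
  · intro x hx
    have hsum : ∑ i, pd (fun z => u z i - θ * eval z (pderiv i h)) i x
        = (∑ i, pd (fun z => u z i) i x)
          - θ * ∑ i, eval x (pderiv i (pderiv i h)) := by
      rw [Finset.mul_sum, ← Finset.sum_sub_distrib]
      exact Finset.sum_congr rfl fun i _ => pd_sub_aux u hu (pderiv i h) θ i x
    rw [hsum]
    have h1 := hdiv x hx
    have h2 := ha₁bd x hx
    have h3 := (abs_le.mp h2).1
    nlinarith [mul_le_mul_of_nonneg_left h3 hθ.le]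
  · intro x hx
    have e : ∀ i : Fin m,
        (u x i - θ * eval x (pderiv i h)) * eval x (pderiv i h)
          = u x i * eval x (pderiv i h) - θ * (eval x (pderiv i h)) ^ 2 :=
      fun i => by ring
    rw [Finset.sum_congr rfl fun i _ => e i, Finset.sum_sub_distrib,
      ← Finset.mul_sum, hbdry x hx]
    have := ha₂bd x hx
    nlinarith
end
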